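/- Let β be a mixed base, m ≥ 1, and L ∈ ℕ. Define ℱ_L recursively by ℱ_{-1} = {(0,...,0)} and ℱ_L^{β} = {F ∈ ℕ^m : σ_β(F)_0 = 0 and F̂ + r ∈ ℱ_{L-1}^{β̂} for some r ∈ ρ(F)}. Then every F ∈ ℱ_L^β satisfies: there exists X ∈ ℕ^m with σ_β(X + F) = σ_β(X). -/

import Mathlib

open scoped BigOperators

/-- β̂_L = β_0 ⋯ β_{L-1}, the place value of digit L in mixed base β. -/
def bhat (β : ℕ → ℕ) (L : ℕ) : ℕ := ∏ i ∈ Finset.range L, β i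

/-- The L-th digit of n in the mixed base β. -/
def mdigit (β : ℕ → ℕ) (n L : ℕ) : ℕ := n / bhat β L % β L

/-- Digit-wise addition modulo β_L in mixed base β. -/
def moplus (β : ℕ → ℕ) (n h : ℕ) : ℕ :=
  ∑ L ∈ Finset.range (n + h + 1), ((mdigit β n L + mdigit β h L) % β L) * bhat β L

/-- Digit-wise subtraction modulo β_L in mixed base β. -/
def mominus (β : ℕ → ℕ) (n h : ℕ) : ℕ :=
  ∑ L ∈ Finset.range (n + h + 1), ((β L + mdigit β n L - mdigit β h L) % β L) * bhat β L

/-- σ_β(X) = x^0 ⊕ ⋯ ⊕ x^{m-1}: the digit-wise Nim sum in mixed base β. -/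
def msigma (β : ℕ → ℕ) {m : ℕ} (X : Fin m → ℕ) : ℕ :=
  ∑ L ∈ Finset.range (∑ i, X i + 1), ((∑ i, mdigit β (X i) L) % β L) * bhat β L

/-- Hamming weight: number of nonzero components. -/
def hamwt {m : ℕ} (C : Fin m → ℕ) : ℕ := (Finset.univ.filter (fun i => C i ≠ 0)).card

/-- ord_β(n): the largest L with β̂_L ∣ n (⊤ for n = 0). -/
def mord (β : ℕ → ℕ) (n : ℕ) : ℕ∞ :=
  if n = 0 then ⊤ else (Nat.findGreatest (fun L => bhat β L ∣ n) n : ℕ∞)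

/-- 𝒞 is a Sprague-Grundy system of σ_β: its members are nonzero moves and
σ_β satisfies the mex recursion of the take-away game Γ(ℕ^m, 𝒞), i.e. σ_β is the
Sprague-Grundy function of that game. -/
def IsSGSystem (β : ℕ → ℕ) {m : ℕ} (𝒞 : Set (Fin m → ℕ)) : Prop :=
  (∀ C ∈ 𝒞, C ≠ 0) ∧
  ∀ X : Fin m → ℕ, msigma β X =
    sInf {n : ℕ | ∀ C ∈ 𝒞, (∀ i, C i ≤ X i) → msigma β (fun i => X i - C i) ≠ n}

/-- ρ(F) = {r ∈ {0,1}^m : rⁱ ≤ fⁱ₀}. -/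
def rho (β : ℕ → ℕ) {m : ℕ} (F : Fin m → ℕ) : Set (Fin m → ℕ) :=
  {r | ∀ i, r i ≤ 1 ∧ r i ≤ F i % β 0}

/-- The recursively defined sets ℱ_L^β (with ℱ_{-1} = {0}). -/
def FA (m : ℕ) : ℕ → (ℕ → ℕ) → Set (Fin m → ℕ)
  | 0, β => {F | mdigit β (msigma β F) 0 = 0 ∧
      ∃ r ∈ rho β F, ∀ i, F i / β 0 + r i = 0}
  | (L + 1), β => {F | mdigit β (msigma β F) 0 = 0 ∧
      ∃ r ∈ rho β F, (fun i => F i / β 0 + r i) ∈ FA m L (fun K => β (K + 1))}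

/-!
Splitting off the lowest digit gives `σ_β(X) = (Σ xⁱ mod β₀) + β₀ · σ_β̂(X̂)`. Given a witness `Y`
for `F̂ + r` with respect to `β̂`, take `xⁱ = β₀ yⁱ + rⁱ (β₀ - fⁱ₀)`. Then `X̂ = Y`, and adding `F`
carries exactly `rⁱ` into the next digit, so the quotient of `X + F` by `β₀` is `Y + F̂ + r`; the
lowest digits of `σ_β(X + F)` and `σ_β(X)` agree because `β₀ ∣ Σ fⁱ`. Induct on `L`, shifting `β`.
-/

open Finset

lemma bhat_zero (β : ℕ → ℕ) : bhat β 0 = 1 := by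
  simp [bhat]

lemma bhat_succ (β : ℕ → ℕ) (L : ℕ) : bhat β (L + 1) = bhat β L * β L :=
  prod_range_succ _ _

lemma bhat_succ_eq_mul_shift (β : ℕ → ℕ) (L : ℕ) :
    bhat β (L + 1) = β 0 * bhat (fun K => β (K + 1)) L := by
  rw [bhat, prod_range_succ', mul_comm, bhat]

lemma lt_bhat {β : ℕ → ℕ} (hβ : ∀ K, 2 ≤ β K) (L : ℕ) : L < bhat β L := by
  induction L with
  | zero => simp [bhat_zero]
  | succ L ih =>
    rw [bhat_succ]
    nlinarith [hβ L]

lemma mdigit_zero_right (β : ℕ → ℕ) (n : ℕ) : mdigit β n 0 = n % β 0 := by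
  simp [mdigit, bhat_zero]

lemma mdigit_succ (β : ℕ → ℕ) (n L : ℕ) :
    mdigit β n (L + 1) = mdigit (fun K => β (K + 1)) (n / β 0) L := by
  simp [mdigit, bhat_succ_eq_mul_shift, Nat.div_div_eq_div_mul]

lemma msigma_eq_sum_range {β : ℕ → ℕ} (hβ : ∀ K, 2 ≤ β K) {m : ℕ} (X : Fin m → ℕ) {N : ℕ}
    (hN : ∑ i, X i < N) :
    msigma β X = ∑ L ∈ range N, ((∑ i, mdigit β (X i) L) % β L) * bhat β L := by
  refine sum_subset (range_subset_range.2 hN) fun L _ hL => ?_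
  have hdigit (i : Fin m) : mdigit β (X i) L = 0 := by
    have hXi : X i ≤ ∑ j, X j := single_le_sum (fun j _ => Nat.zero_le (X j)) (mem_univ i)
    have hL' := lt_bhat hβ L
    simp only [mem_range, not_lt] at hL
    simp [mdigit, Nat.div_eq_of_lt (show X i < bhat β L by omega)]
  simp [hdigit]

lemma msigma_eq_mod_add_mul_shift {β : ℕ → ℕ} (hβ : ∀ K, 2 ≤ β K) {m : ℕ} (X : Fin m → ℕ) :
    msigma β X = (∑ i, X i) % β 0
      + β 0 * msigma (fun K => β (K + 1)) (fun i => X i / β 0) := by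
  have hshift : ∑ i, X i / β 0 < ∑ i, X i + 1 :=
    Nat.lt_succ_of_le (sum_le_sum fun i _ => Nat.div_le_self (X i) (β 0))
  rw [msigma_eq_sum_range hβ X (by omega : ∑ i, X i < ∑ i, X i + 1 + 1), sum_range_succ',
    msigma_eq_sum_range (fun K => hβ (K + 1)) _ hshift, mul_sum, add_comm]
  congr 1
  · simp [mdigit_zero_right, bhat_zero, ← sum_nat_mod]
  · refine sum_congr rfl fun L _ => ?_
    simp only [mdigit_succ, bhat_succ_eq_mul_shift]
    ring

lemma mdigit_msigma_zero {β : ℕ → ℕ} (hβ : ∀ K, 2 ≤ β K) {m : ℕ} (X : Fin m → ℕ) :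
    mdigit β (msigma β X) 0 = (∑ i, X i) % β 0 := by
  rw [mdigit_zero_right, msigma_eq_mod_add_mul_shift hβ, Nat.add_mul_mod_self_left, Nat.mod_mod]

lemma mul_add_complement_div {b f r : ℕ} (hb : 0 < b) (hr : r ≤ 1) (hrf : r ≤ f % b) (y : ℕ) :
    (b * y + r * (b - f % b)) / b = y := by
  rw [Nat.mul_add_div hb, Nat.div_eq_of_lt, add_zero]
  rcases Nat.le_one_iff_eq_zero_or_eq_one.1 hr with rfl | rfl <;> omega

lemma mul_add_complement_add_div {b f r : ℕ} (hb : 0 < b) (hr : r ≤ 1) (y : ℕ) :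
    (b * y + r * (b - f % b) + f) / b = y + (f / b + r) := by
  rcases Nat.le_one_iff_eq_zero_or_eq_one.1 hr with rfl | rfl
  · rw [zero_mul, add_zero, add_zero, Nat.mul_add_div hb]
  · have hf := Nat.div_add_mod f b
    have hfb := Nat.mod_lt f hb
    have hcarry : b * y + 1 * (b - f % b) + f = b * (y + (f / b + 1)) := by
      rw [one_mul, mul_add, mul_add, mul_one]
      omega
    rw [hcarry, Nat.mul_div_cancel_left _ hb]

lemma exists_msigma_add_eq_of_shift {β : ℕ → ℕ} (hβ : ∀ K, 2 ≤ β K) {m : ℕ} {F r : Fin m → ℕ}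
    (hσ : mdigit β (msigma β F) 0 = 0) (hr : r ∈ rho β F)
    (hY : ∃ Y : Fin m → ℕ, msigma (fun K => β (K + 1)) (fun i => Y i + (F i / β 0 + r i))
      = msigma (fun K => β (K + 1)) Y) :
    ∃ X : Fin m → ℕ, msigma β (fun i => X i + F i) = msigma β X := by
  obtain ⟨Y, hY⟩ := hY
  have hb : 0 < β 0 := by linarith [hβ 0]
  refine ⟨fun i => β 0 * Y i + r i * (β 0 - F i % β 0), ?_⟩
  rw [msigma_eq_mod_add_mul_shift hβ, msigma_eq_mod_add_mul_shift hβ]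
  simp only [mul_add_complement_div hb (hr _).1 (hr _).2,
    mul_add_complement_add_div hb (hr _).1, hY]
  obtain ⟨c, hc⟩ : β 0 ∣ ∑ i, F i := Nat.dvd_of_mod_eq_zero (by rwa [← mdigit_msigma_zero hβ])
  rw [sum_add_distrib, hc, Nat.add_mul_mod_self_left]

theorem stmt19_general (β : ℕ → ℕ) (hβ : ∀ L, 2 ≤ β L) {m : ℕ}
    (L : ℕ) (F : Fin m → ℕ) (hF : F ∈ FA m L β) :
    ∃ X : Fin m → ℕ, msigma β (fun i => X i + F i) = msigma β X := by
  induction L generalizing β F with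
  | zero =>
    obtain ⟨hσ, r, hr, hzero⟩ := hF
    refine exists_msigma_add_eq_of_shift hβ hσ hr ⟨0, ?_⟩
    simp only [Pi.zero_apply, hzero, add_zero]
    rfl
  | succ L ih =>
    obtain ⟨hσ, r, hr, hmem⟩ := hF
    exact exists_msigma_add_eq_of_shift hβ hσ hr (ih _ (fun K => hβ (K + 1)) _ hmem)

/-- Every member of ℱ_L^β lies in ℱ^β: it fails to change σ_β at some X. -/
theorem stmt19 (β : ℕ → ℕ) (hβ : ∀ L, 2 ≤ β L) {m : ℕ} (hm : 1 ≤ m)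
    (L : ℕ) (F : Fin m → ℕ) (hF : F ∈ FA m L β) :
    ∃ X : Fin m → ℕ, msigma β (fun i => X i + F i) = msigma β X :=
  stmt19_general β hβ L F hF
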